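/- For every fixed x ∈ ℝ^{d_x} and all y₁, y₂ ∈ ℝ^{d_y}, ‖v̂*(x,y₁) − v̂*(x,y₂)‖ ≤ (L_{f,1}/μ + C_{f_y}L_{g,2}/μ²)·‖y₁ − y₂‖; that is, y ↦ v̂*(x,y) is Lipschitz with constant L̄_v := L_{f,1}/μ + C_{f_y}L_{g,2}/μ². -/

import Mathlib

/-!
Strong convexity makes every Hessian `H y = ∇²_yy g(x, y)` coercive, `μ‖w‖² ≤ ⟪H y w, w⟫`: the
function `t ↦ g(x, y + t w) - μ/2 ‖y + t w‖²` is convex, so its second derivative at `0` is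
nonnegative. Coercivity gives `μ‖w‖ ≤ ‖H y w‖`, hence `‖v̂*(x, y)‖ ≤ C_{f_y}/μ`, and applied to
`H y₁ (v₁ - v₂) = (∇_y f(x, y₁) - ∇_y f(x, y₂)) + (H y₂ - H y₁) v₂` it gives
`μ‖v₁ - v₂‖ ≤ L_{f,1}‖y₁ - y₂‖ + L_{g,2}‖y₁ - y₂‖ · C_{f_y}/μ`.
-/

noncomputable section

open scoped RealInnerProductSpace

variable {dx dy : ℕ}

/-- Partial gradient in the first argument. -/
def gX (f : EuclideanSpace ℝ (Fin dx) → EuclideanSpace ℝ (Fin dy) → ℝ)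
    (x : EuclideanSpace ℝ (Fin dx)) (y : EuclideanSpace ℝ (Fin dy)) :
    EuclideanSpace ℝ (Fin dx) :=
  gradient (fun x' => f x' y) x

/-- Partial gradient in the second argument. -/
def gY (f : EuclideanSpace ℝ (Fin dx) → EuclideanSpace ℝ (Fin dy) → ℝ)
    (x : EuclideanSpace ℝ (Fin dx)) (y : EuclideanSpace ℝ (Fin dy)) :
    EuclideanSpace ℝ (Fin dy) :=
  gradient (fun y' => f x y') y

/-- Second derivative `∇_y∇_y g (x,y)` as a linear map `ℝ^{d_y} → ℝ^{d_y}`. -/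
def gYY (g : EuclideanSpace ℝ (Fin dx) → EuclideanSpace ℝ (Fin dy) → ℝ)
    (x : EuclideanSpace ℝ (Fin dx)) (y : EuclideanSpace ℝ (Fin dy)) :
    EuclideanSpace ℝ (Fin dy) →L[ℝ] EuclideanSpace ℝ (Fin dy) :=
  fderiv ℝ (fun y' => gY g x y') y

lemma ConvexOn.nonneg_of_hasDerivAt_of_hasDerivAt {φ φ' : ℝ → ℝ} {c t : ℝ}
    (hφ : ConvexOn ℝ Set.univ φ) (hφ' : ∀ s, HasDerivAt φ (φ' s) s) (hφ'' : HasDerivAt φ' c t) :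
    0 ≤ c := by
  have hderiv : deriv φ = φ' := funext fun s => (hφ' s).deriv
  have hmono : Monotone φ' := by
    rw [← hderiv, ← monotoneOn_univ]
    exact hφ.monotoneOn_deriv fun s _ => (hφ' s).differentiableAt
  exact hφ''.deriv ▸ hmono.deriv_nonneg

section InnerProductSpace

variable {E : Type*} [NormedAddCommGroup E] [InnerProductSpace ℝ E]

lemma StrongConvexOn.mul_norm_sq_le_inner_fderiv_gradient [CompleteSpace E] {G : E → ℝ} {μ : ℝ}
    (hG : StrongConvexOn Set.univ μ G) (hGd : Differentiable ℝ G) {y : E}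
    (hGy : DifferentiableAt ℝ (gradient G) y) (w : E) :
    μ * ‖w‖ ^ 2 ≤ ⟪fderiv ℝ (gradient G) y w, w⟫ := by
  have hline (t : ℝ) : HasDerivAt (fun t : ℝ => y + t • w) w t := by
    simpa using ((hasDerivAt_id t).smul_const w).const_add y
  have hconv : ConvexOn ℝ Set.univ fun t : ℝ => G (y + t • w) - μ / 2 * ‖y + t • w‖ ^ 2 :=
    ((strongConvexOn_iff_convex.mp hG).translate_right y).comp_linearMap
      (LinearMap.toSpanSingleton ℝ E w)
  have hderiv (t : ℝ) : HasDerivAt (fun t : ℝ => G (y + t • w) - μ / 2 * ‖y + t • w‖ ^ 2)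
      (⟪gradient G (y + t • w), w⟫ - μ * ⟪y + t • w, w⟫) t := by
    have hGline := (hGd (y + t • w)).hasGradientAt.hasFDerivAt.comp_hasDerivAt t (hline t)
    refine (hGline.sub (((hline t).norm_sq).const_mul (μ / 2))).congr_deriv ?_
    simp only [InnerProductSpace.toDual_apply_apply]
    ring
  have hderiv2 : HasDerivAt (fun t : ℝ => ⟪gradient G (y + t • w), w⟫ - μ * ⟪y + t • w, w⟫)
      (⟪fderiv ℝ (gradient G) y w, w⟫ - μ * ‖w‖ ^ 2) 0 := by
    have hGy' : HasFDerivAt (gradient G) (fderiv ℝ (gradient G) y) (y + (0 : ℝ) • w) := by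
      simpa using hGy.hasFDerivAt
    refine (((hGy'.comp_hasDerivAt 0 (hline 0)).inner ℝ (hasDerivAt_const 0 w)).sub
      (((hline 0).inner ℝ (hasDerivAt_const 0 w)).const_mul μ)).congr_deriv ?_
    simp
  linarith [hconv.nonneg_of_hasDerivAt_of_hasDerivAt hderiv hderiv2]

lemma ContDiff.differentiable_gradient [CompleteSpace E] {G : E → ℝ} (hG : ContDiff ℝ 2 G) :
    Differentiable ℝ (gradient G) :=
  (InnerProductSpace.toDual ℝ E).symm.differentiable.comp
    ((hG.fderiv_right (m := 1) (by norm_num)).differentiable one_ne_zero)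

lemma mul_norm_le_norm_apply_of_coercive {A : E →L[ℝ] E} {μ : ℝ}
    (hA : ∀ w, μ * ‖w‖ ^ 2 ≤ ⟪A w, w⟫) (w : E) : μ * ‖w‖ ≤ ‖A w‖ := by
  rcases (norm_nonneg w).eq_or_lt with hw | hw
  · simp [← hw]
  · refine le_of_mul_le_mul_right ?_ hw
    calc μ * ‖w‖ * ‖w‖ = μ * ‖w‖ ^ 2 := by ring
      _ ≤ ⟪A w, w⟫ := hA w
      _ ≤ ‖A w‖ * ‖w‖ := real_inner_le_norm _ _

lemma mul_norm_sub_le_of_coercive {A₁ A₂ : E →L[ℝ] E} {μ : ℝ}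
    (hA₁ : ∀ w, μ * ‖w‖ ^ 2 ≤ ⟪A₁ w, w⟫) {v₁ v₂ b₁ b₂ : E} (h₁ : A₁ v₁ = b₁) (h₂ : A₂ v₂ = b₂) :
    μ * ‖v₁ - v₂‖ ≤ ‖b₁ - b₂‖ + ‖A₁ - A₂‖ * ‖v₂‖ :=
  calc μ * ‖v₁ - v₂‖ ≤ ‖A₁ (v₁ - v₂)‖ := mul_norm_le_norm_apply_of_coercive hA₁ _
    _ = ‖(b₁ - b₂) + (A₂ - A₁) v₂‖ := by
      rw [map_sub, sub_apply, h₁, h₂]; abel_nf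
    _ ≤ ‖b₁ - b₂‖ + ‖A₁ - A₂‖ * ‖v₂‖ := by
      rw [norm_sub_rev A₁]; exact norm_add_le_of_le le_rfl ((A₂ - A₁).le_opNorm v₂)

lemma norm_solution_sub_le {Y : Type*} [SeminormedAddCommGroup Y] {A : Y → E →L[ℝ] E}
    {b v : Y → E} {μ Lb LA C : ℝ} (hμ : 0 < μ) (hA : ∀ y w, μ * ‖w‖ ^ 2 ≤ ⟪A y w, w⟫)
    (hv : ∀ y, A y (v y) = b y) (hb_lip : ∀ y₁ y₂, ‖b y₁ - b y₂‖ ≤ Lb * ‖y₁ - y₂‖)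
    (hA_lip : ∀ y₁ y₂, ‖A y₁ - A y₂‖ ≤ LA * ‖y₁ - y₂‖) (hb_bdd : ∀ y, ‖b y‖ ≤ C) (y₁ y₂ : Y) :
    ‖v y₁ - v y₂‖ ≤ (Lb / μ + C * LA / μ ^ 2) * ‖y₁ - y₂‖ := by
  have hv_bdd : ‖v y₂‖ ≤ C / μ := by
    rw [le_div_iff₀' hμ]
    exact (mul_norm_le_norm_apply_of_coercive (hA y₂) _).trans (hv y₂ ▸ hb_bdd y₂)
  have hLA : 0 ≤ LA * ‖y₁ - y₂‖ := (norm_nonneg _).trans (hA_lip y₁ y₂)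
  have key : μ * ‖v y₁ - v y₂‖ ≤ Lb * ‖y₁ - y₂‖ + LA * ‖y₁ - y₂‖ * (C / μ) :=
    (mul_norm_sub_le_of_coercive (hA y₁) (hv y₁) (hv y₂)).trans
      (add_le_add (hb_lip y₁ y₂) (mul_le_mul (hA_lip y₁ y₂) hv_bdd (norm_nonneg _) hLA))
  calc ‖v y₁ - v y₂‖ ≤ (Lb * ‖y₁ - y₂‖ + LA * ‖y₁ - y₂‖ * (C / μ)) / μ := by
        rwa [le_div_iff₀' hμ]
    _ = (Lb / μ + C * LA / μ ^ 2) * ‖y₁ - y₂‖ := by field_simp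

end InnerProductSpace

theorem vhat_lipschitz_in_y_general
    (f g : EuclideanSpace ℝ (Fin dx) → EuclideanSpace ℝ (Fin dy) → ℝ)
    (hg : ContDiff ℝ 2 (Function.uncurry g))
    (μ Lf1 Lg2 Cfy : ℝ) (hμ : 0 < μ)
    (hsc : ∀ x, StrongConvexOn Set.univ μ (fun y => g x y))
    (hfy_lip : ∀ x₁ y₁ x₂ y₂, ‖gY f x₁ y₁ - gY f x₂ y₂‖ ≤ Lf1 * (‖x₁ - x₂‖ + ‖y₁ - y₂‖))
    (hgyy_lip : ∀ x₁ y₁ x₂ y₂, ‖gYY g x₁ y₁ - gYY g x₂ y₂‖ ≤ Lg2 * (‖x₁ - x₂‖ + ‖y₁ - y₂‖))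
    (hfy_bd : ∀ x y, ‖gY f x y‖ ≤ Cfy)
    (vhat : EuclideanSpace ℝ (Fin dx) → EuclideanSpace ℝ (Fin dy) → EuclideanSpace ℝ (Fin dy))
    (hvhat : ∀ x y, gYY g x y (vhat x y) = gY f x y) :
    ∀ x y₁ y₂, ‖vhat x y₁ - vhat x y₂‖ ≤ (Lf1 / μ + Cfy * Lg2 / μ ^ 2) * ‖y₁ - y₂‖ := by
  intro x
  have hgx : ContDiff ℝ 2 (fun y => g x y) := hg.comp (contDiff_const.prodMk contDiff_id)
  have hgyy_coercive (y w : EuclideanSpace ℝ (Fin dy)) : μ * ‖w‖ ^ 2 ≤ ⟪gYY g x y w, w⟫ :=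
    (hsc x).mul_norm_sq_le_inner_fderiv_gradient (hgx.differentiable two_ne_zero)
      (hgx.differentiable_gradient y) w
  exact norm_solution_sub_le hμ hgyy_coercive (hvhat x)
    (fun y₁ y₂ => by simpa using hfy_lip x y₁ x y₂) (fun y₁ y₂ => by simpa using hgyy_lip x y₁ x y₂)
    (hfy_bd x)

/-- `y ↦ v̂*(x,y)` is Lipschitz with constant
`L̄_v := L_{f,1}/μ + C_{f_y} L_{g,2}/μ²`. -/
theorem vhat_lipschitz_in_y
    (f g : EuclideanSpace ℝ (Fin dx) → EuclideanSpace ℝ (Fin dy) → ℝ)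
    (hf : ContDiff ℝ 2 (Function.uncurry f)) (hg : ContDiff ℝ 2 (Function.uncurry g))
    (μ Lf1 Lg2 Cfy : ℝ) (hμ : 0 < μ)
    (hsc : ∀ x, StrongConvexOn Set.univ μ (fun y => g x y))
    (hfx_lip : ∀ x₁ y₁ x₂ y₂, ‖gX f x₁ y₁ - gX f x₂ y₂‖ ≤ Lf1 * (‖x₁ - x₂‖ + ‖y₁ - y₂‖))
    (hfy_lip : ∀ x₁ y₁ x₂ y₂, ‖gY f x₁ y₁ - gY f x₂ y₂‖ ≤ Lf1 * (‖x₁ - x₂‖ + ‖y₁ - y₂‖))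
    (hgyy_lip : ∀ x₁ y₁ x₂ y₂, ‖gYY g x₁ y₁ - gYY g x₂ y₂‖ ≤ Lg2 * (‖x₁ - x₂‖ + ‖y₁ - y₂‖))
    (hfy_bd : ∀ x y, ‖gY f x y‖ ≤ Cfy)
    (vhat : EuclideanSpace ℝ (Fin dx) → EuclideanSpace ℝ (Fin dy) → EuclideanSpace ℝ (Fin dy))
    (hvhat : ∀ x y, gYY g x y (vhat x y) = gY f x y) :
    ∀ x y₁ y₂, ‖vhat x y₁ - vhat x y₂‖ ≤ (Lf1 / μ + Cfy * Lg2 / μ ^ 2) * ‖y₁ - y₂‖ :=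
  vhat_lipschitz_in_y_general f g hg μ Lf1 Lg2 Cfy hμ hsc hfy_lip hgyy_lip hfy_bd vhat hvhat
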